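/- An epistemically guarded transition system Γ has at most one solution if there is a class ℳ of epistemic transition structures containing all solutions of Γ such that Γ depends on the past with respect to ℳ. Conversely, if Γ has at most one solution, such a class ℳ exists. -/
import Mathlib


namespace KBP

/-- `k`-step reachable states of a transition system with initial states `S0`. -/
def RSk {S : Type} (S0 : Set S) (T : Set (S × S)) : ℕ → Set S
  | 0 => S0
  | k + 1 => RSk S0 T k ∪ {s' | ∃ s ∈ RSk S0 T k, (s, s') ∈ T}

/-- `k`-step reachable transitions. -/
def RTk {S : Type} (S0 : Set S) (T : Set (S × S)) : ℕ → Set (S × S)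
  | 0 => ∅
  | k + 1 => RTk S0 T k ∪ {p | p ∈ T ∧ p.1 ∈ RSk S0 T k}

/-- All reachable states. -/
def Reach {S : Type} (S0 : Set S) (T : Set (S × S)) : Set S := ⋃ k, RSk S0 T k

/-- Epistemic formulas (with the abbreviations `true`, `∨`, `M` as primitives). -/
inductive EFrm (P A : Type) : Type
  | prop : P → EFrm P A
  | nprop : P → EFrm P A
  | fls : EFrm P A
  | tru : EFrm P A
  | neg : EFrm P A → EFrm P A
  | and : EFrm P A → EFrm P A → EFrm P A
  | or : EFrm P A → EFrm P A → EFrm P A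
  | K : A → EFrm P A → EFrm P A
  | M : A → EFrm P A → EFrm P A

/-- Ordinary (Kripke) satisfaction over the reachable part of an epistemic
transition structure with transition relation `T`. -/
def ksat (E : A → Set (S × S)) (L : S → Set P) (S0 : Set S)
    (T : Set (S × S)) : S → EFrm P A → Prop
  | s, .prop p => p ∈ L s
  | s, .nprop p => p ∉ L s
  | _, .fls => False
  | _, .tru => True
  | s, .neg φ => ¬ ksat E L S0 T s φ
  | s, .and φ ψ => ksat E L S0 T s φ ∧ ksat E L S0 T s ψ
  | s, .or φ ψ => ksat E L S0 T s φ ∨ ksat E L S0 T s ψ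
  | s, .K a φ => ∀ s' ∈ Reach S0 T, (s, s') ∈ E a → ksat E L S0 T s' φ
  | s, .M a φ => ∃ s' ∈ Reach S0 T, (s, s') ∈ E a ∧ ksat E L S0 T s' φ

/-- Ordinary interpretation of an epistemically guarded transition system. -/
def interpT (E : A → Set (S × S)) (L : S → Set P) (S0 : Set S)
    (Γ : Set (EFrm P A × Set (S × S))) (T : Set (S × S)) : Set (S × S) :=
  {p | ∃ g ∈ Γ, p ∈ g.2 ∧ p.1 ∈ Reach S0 T ∧ ksat E L S0 T p.1 g.1}

/-- A formula depends on the past w.r.t. a class `ℳ` of transition relations. -/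
def dependsOnPast (E : A → Set (S × S)) (L : S → Set P) (S0 : Set S)
    (ℳ : Set (Set (S × S))) (φ : EFrm P A) : Prop :=
  ∀ T₁ ∈ ℳ, ∀ T₂ ∈ ℳ, ∀ k : ℕ, RTk S0 T₁ k = RTk S0 T₂ k →
    ∀ s, s ∈ RSk S0 T₁ k → s ∈ RSk S0 T₂ k →
      (ksat E L S0 T₁ s φ ↔ ksat E L S0 T₂ s φ)

/-- `Γ` has at most one solution if, and only if, there is a class `ℳ` of
epistemic transition structures containing all solutions of `Γ` such that `Γ`
depends on the past w.r.t. `ℳ`. -/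
theorem at_most_one_solution_iff_dependsOnPast {S P A : Type}
    (E : A → Set (S × S)) (L : S → Set P) (S0 : Set S)
    (Γ : Set (EFrm P A × Set (S × S))) :
    (∃ ℳ : Set (Set (S × S)),
        (∀ M : Set (S × S), interpT E L S0 Γ M = M → M ∈ ℳ) ∧
        (∀ g ∈ Γ, dependsOnPast E L S0 ℳ g.1)) ↔
    (∀ M₁ M₂ : Set (S × S),
        interpT E L S0 Γ M₁ = M₁ → interpT E L S0 Γ M₂ = M₂ → M₁ = M₂) := by
  constructor
  · rintro ⟨ℳ, hsol, hdep⟩ M₁ M₂ h₁ h₂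
    have hm₁ := hsol M₁ h₁
    have hm₂ := hsol M₂ h₂
    have key : ∀ k, RSk S0 M₁ k = RSk S0 M₂ k ∧ RTk S0 M₁ k = RTk S0 M₂ k := by
      intro k
      induction k with
      | zero => exact ⟨rfl, rfl⟩
      | succ k ih =>
        obtain ⟨hS, hT⟩ := ih
        have htrans : ∀ s, s ∈ RSk S0 M₁ k → ∀ s' : S,
            ((s, s') ∈ M₁ ↔ (s, s') ∈ M₂) := by
          intro s hs s'
          have hs₂ : s ∈ RSk S0 M₂ k := hS ▸ hs
          constructor
          · intro h
            rw [← h₁] at h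
            obtain ⟨g, hg, hmem, _, hsat⟩ := h
            rw [← h₂]
            exact ⟨g, hg, hmem, Set.mem_iUnion.mpr ⟨k, hs₂⟩,
              (hdep g hg M₁ hm₁ M₂ hm₂ k hT s hs hs₂).mp hsat⟩
          · intro h
            rw [← h₂] at h
            obtain ⟨g, hg, hmem, _, hsat⟩ := h
            rw [← h₁]
            exact ⟨g, hg, hmem, Set.mem_iUnion.mpr ⟨k, hs⟩,
              (hdep g hg M₁ hm₁ M₂ hm₂ k hT s hs hs₂).mpr hsat⟩
        constructor
        · show RSk S0 M₁ k ∪ _ = RSk S0 M₂ k ∪ _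
          rw [hS]
          congr 1
          ext s'
          simp only [Set.mem_setOf_eq]
          constructor
          · rintro ⟨s, hs, ht⟩
            exact ⟨s, hs, (htrans s (hS ▸ hs) s').mp ht⟩
          · rintro ⟨s, hs, ht⟩
            exact ⟨s, hs, (htrans s (hS ▸ hs) s').mpr ht⟩
        · show RTk S0 M₁ k ∪ _ = RTk S0 M₂ k ∪ _
          rw [hT]
          congr 1
          ext p
          simp only [Set.mem_setOf_eq]
          constructor
          · rintro ⟨ht, hs⟩
            exact ⟨(htrans p.1 hs p.2).mp ht, hS ▸ hs⟩
          · rintro ⟨ht, hs⟩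
            have hs₁ : p.1 ∈ RSk S0 M₁ k := hS ▸ hs
            exact ⟨(htrans p.1 hs₁ p.2).mpr ht, hs₁⟩
        -- done
    ext p
    constructor
    · intro h
      have h' := h
      rw [← h₁] at h'
      obtain ⟨g, hg, hmem, hreach, hsat⟩ := h'
      obtain ⟨k, hk⟩ := Set.mem_iUnion.mp hreach
      have hk₂ : p.1 ∈ RSk S0 M₂ k := (key k).1 ▸ hk
      rw [← h₂]
      exact ⟨g, hg, hmem, Set.mem_iUnion.mpr ⟨k, hk₂⟩,
        (hdep g hg M₁ hm₁ M₂ hm₂ k (key k).2 p.1 hk hk₂).mp hsat⟩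
    · intro h
      have h' := h
      rw [← h₂] at h'
      obtain ⟨g, hg, hmem, hreach, hsat⟩ := h'
      obtain ⟨k, hk⟩ := Set.mem_iUnion.mp hreach
      have hk₁ : p.1 ∈ RSk S0 M₁ k := (key k).1 ▸ hk
      rw [← h₁]
      exact ⟨g, hg, hmem, Set.mem_iUnion.mpr ⟨k, hk₁⟩,
        (hdep g hg M₁ hm₁ M₂ hm₂ k (key k).2 p.1 hk₁ hk).mpr hsat⟩
  · intro h
    refine ⟨{T | interpT E L S0 Γ T = T}, fun M hM => hM, fun g _ => ?_⟩
    intro T₁ h₁ T₂ h₂ k _ s _ _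
    have : T₁ = T₂ := h T₁ T₂ h₁ h₂
    subst this
    rfl

end KBP
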